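/- (Geometric convergence of the Rayleigh quotients) Fix 0 ≤ η < 1 and let (u_k) be a sequence in H generated by approximate inverse iteration: each u_k has ‖u_k‖₀ = 1, λ(u₀) < λ₂, and for each k, u_{k+1} = (u_k − v_k)/‖u_k − v_k‖₀ where w_k solves a(w_k,χ) = a(u_k,χ) − λ(u_k)(u_k,χ) for all χ ∈ H and ‖v_k − w_k‖ ≤ η‖w_k‖. Then the Rayleigh quotients λ(u_k) decrease monotonically, satisfy λ(u_{k+1}) − λ₁ ≤ q(λ(u_k))(λ(u_k) − λ₁), and since q(λ(u_k)) ≤ q(λ(u₀)) < 1, one has λ(u_k) − λ₁ ≤ q(λ(u₀))^k (λ(u₀) − λ₁) for all k; in particular λ(u_k) → λ₁. -/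

import Mathlib

open scoped RealInnerProductSpace

/-- The Rayleigh quotient `λ(u) = a(u,u)/(u,u)`, where `a = ⟪·,·⟫` is the inner product of the
Hilbert space `H` (inducing the energy norm `‖·‖`) and `b` is the second inner product `(·,·)`
(inducing the weaker norm `‖·‖₀ = √(b u u)`). Note `⟪u,u⟫ = ‖u‖²`. -/
noncomputable def rayleigh {H : Type*} [NormedAddCommGroup H] [InnerProductSpace ℝ H]
    (b : LinearMap.BilinForm ℝ H) (u : H) : ℝ :=
  ‖u‖ ^ 2 / b u u

/-- The convergence factor function `q(λ)` from Theorem 3.1 of the paper. -/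
noncomputable def qfun (lam1 lam2 eta l : ℝ) : ℝ :=
  1 - (1 - eta ^ 2) * l * (lam2 - l) ^ 2 /
    (lam2 ^ 2 * l + (1 - eta ^ 2) * (lam2 - l) ^ 2 * (l - lam1))

section Helpers

variable {H : Type*} [NormedAddCommGroup H] [InnerProductSpace ℝ H]

private lemma bilin_expand (b : LinearMap.BilinForm ℝ H) (x y : H) (c : ℝ) :
    b (x + c • y) (x + c • y) = b x x + c * b x y + c * b y x + c ^ 2 * b y y := by
  simp only [map_add, map_smul, LinearMap.add_apply, LinearMap.smul_apply, smul_eq_mul]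
  ring

private lemma bilin_expand2 (b : LinearMap.BilinForm ℝ H) (x y : H) (a c : ℝ) :
    b (a • x + c • y) (a • x + c • y) =
      a ^ 2 * b x x + a * c * b x y + a * c * b y x + c ^ 2 * b y y := by
  simp only [map_add, map_smul, LinearMap.add_apply, LinearMap.smul_apply, smul_eq_mul]
  ring

private lemma bilin_cs (b : LinearMap.BilinForm ℝ H)
    (hsymm : ∀ x y : H, b x y = b y x) (hpsd : ∀ z : H, 0 ≤ b z z) (x y : H) :
    (b x y) ^ 2 ≤ b x x * b y y := by
  by_cases hy : b y y = 0
  · have hxy : b x y = 0 := by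
      by_contra hne
      have h := hpsd (x + (-(b x x + 1) / b x y) • y)
      rw [bilin_expand, hsymm y x, hy] at h
      rw [div_mul_cancel₀ _ hne] at h
      nlinarith [hpsd x]
    rw [hxy, hy]
    simp
  · have hypos : 0 < b y y := lt_of_le_of_ne (hpsd y) (Ne.symm hy)
    have h := hpsd (b y y • x + (-(b x y)) • y)
    rw [bilin_expand2, hsymm y x] at h
    nlinarith [h, hypos]

private lemma qfun_denom_pos (lam1 lam2 eta l : ℝ) (h1 : 0 < lam1) (hl1 : lam1 ≤ l)
    (heta1 : eta ^ 2 < 1) (h12 : lam1 < lam2) :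
    0 < lam2 ^ 2 * l + (1 - eta ^ 2) * (lam2 - l) ^ 2 * (l - lam1) := by
  have h2 : 0 < lam2 := by linarith
  have hl0 : 0 < l := lt_of_lt_of_le h1 hl1
  have h3 : 0 < lam2 ^ 2 * l := by positivity
  nlinarith [mul_nonneg (mul_nonneg (by linarith : (0:ℝ) ≤ 1 - eta ^ 2)
    (sq_nonneg (lam2 - l))) (by linarith : (0:ℝ) ≤ l - lam1)]

private lemma qfun_mono (lam1 lam2 eta a c : ℝ) (h1 : 0 < lam1) (h12 : lam1 < lam2)
    (heta1 : eta ^ 2 < 1) (ha : lam1 ≤ a) (hac : a ≤ c) (hc2 : c < lam2) :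
    qfun lam1 lam2 eta a ≤ qfun lam1 lam2 eta c := by
  have hDa := qfun_denom_pos lam1 lam2 eta a h1 ha heta1 h12
  have hDc := qfun_denom_pos lam1 lam2 eta c h1 (le_trans ha hac) heta1 h12
  unfold qfun
  have hdiv : (1 - eta ^ 2) * c * (lam2 - c) ^ 2 /
      (lam2 ^ 2 * c + (1 - eta ^ 2) * (lam2 - c) ^ 2 * (c - lam1)) ≤
      (1 - eta ^ 2) * a * (lam2 - a) ^ 2 /
      (lam2 ^ 2 * a + (1 - eta ^ 2) * (lam2 - a) ^ 2 * (a - lam1)) := by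
    rw [div_le_div_iff₀ hDc hDa]
    have hkey : (1 - eta ^ 2) * a * (lam2 - a) ^ 2 *
        (lam2 ^ 2 * c + (1 - eta ^ 2) * (lam2 - c) ^ 2 * (c - lam1)) -
        (1 - eta ^ 2) * c * (lam2 - c) ^ 2 *
        (lam2 ^ 2 * a + (1 - eta ^ 2) * (lam2 - a) ^ 2 * (a - lam1)) =
        (1 - eta ^ 2) * lam2 ^ 2 * a * c * (c - a) * (2 * lam2 - a - c) +
        (1 - eta ^ 2) ^ 2 * (lam2 - a) ^ 2 * (lam2 - c) ^ 2 * lam1 * (c - a) := by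
      ring
    have ht1 : 0 ≤ (1 - eta ^ 2) * lam2 ^ 2 * a * c * (c - a) * (2 * lam2 - a - c) := by
      have e1 : (0:ℝ) ≤ 1 - eta ^ 2 := by linarith
      have e2 : (0:ℝ) ≤ a := by linarith
      have e3 : (0:ℝ) ≤ c := by linarith
      have e4 : (0:ℝ) ≤ c - a := by linarith
      have e5 : (0:ℝ) ≤ 2 * lam2 - a - c := by linarith
      positivity
    have ht2 : 0 ≤ (1 - eta ^ 2) ^ 2 * (lam2 - a) ^ 2 * (lam2 - c) ^ 2 * lam1 * (c - a) := by
      have e4 : (0:ℝ) ≤ c - a := by linarith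
      positivity
    linarith [hkey ▸ (add_nonneg ht1 ht2)]
  linarith

end Helpers

section StepLemma

variable {H : Type*} [NormedAddCommGroup H] [InnerProductSpace ℝ H] [CompleteSpace H]

set_option maxHeartbeats 2000000 in
private lemma step_lemma (b : LinearMap.BilinForm ℝ H)
    (hb_symm : ∀ x y : H, b x y = b y x)
    (hb_pos : ∀ x : H, x ≠ 0 → 0 < b x x)
    (lam1 : ℝ) (hlam1 : 0 < lam1)
    (hmin : ∀ x : H, x ≠ 0 → lam1 ≤ rayleigh b x)
    (lam2 : ℝ) (hlam12 : lam1 < lam2)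
    (hmin2 : ∀ x : H, x ≠ 0 →
      (∀ χ₁ : H, (∀ χ : H, ⟪χ₁, χ⟫ = lam1 * b χ₁ χ) → b x χ₁ = 0) →
      lam2 ≤ rayleigh b x)
    (eta : ℝ) (heta0 : 0 ≤ eta) (heta1 : eta < 1)
    (x wx vx : H) (hx1 : b x x = 1) (hxl2 : rayleigh b x < lam2)
    (hwx : ∀ χ : H, ⟪wx, χ⟫ = ⟪x, χ⟫ - rayleigh b x * b x χ)
    (hvx : ‖vx - wx‖ ≤ eta * ‖wx‖) (hd0 : x - vx ≠ 0) :
    rayleigh b (x - vx) ≤ rayleigh b x ∧ rayleigh b (x - vx) < lam2 ∧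
      rayleigh b (x - vx) - lam1 ≤ qfun lam1 lam2 eta (rayleigh b x) * (rayleigh b x - lam1) := by
  classical
  have hpsd : ∀ z : H, 0 ≤ b z z := by
    intro z
    by_cases hz : z = 0
    · simp [hz]
    · exact (hb_pos z hz).le
  have hx0 : x ≠ 0 := by
    intro h; rw [h] at hx1; simp at hx1
  set l := rayleigh b x with hldef
  have hnx : ‖x‖ ^ 2 = l := by
    rw [hldef]; unfold rayleigh; rw [hx1, div_one]
  have hl1 : lam1 ≤ l := hmin x hx0
  have hl0 : 0 < l := lt_of_lt_of_le hlam1 hl1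
  have hlam2 : (0:ℝ) < lam2 := lt_trans hlam1 hlam12
  have hbb : ∀ z : H, lam1 * b z z ≤ ‖z‖ ^ 2 := by
    intro z
    by_cases hz : z = 0
    · simp [hz]
    · have h := hmin z hz
      unfold rayleigh at h
      rw [le_div_iff₀ (hb_pos z hz)] at h
      exact h
  -- the eigenspace E₁ as a closed submodule
  set K : Submodule ℝ H :=
    { carrier := {z : H | ∀ χ : H, ⟪z, χ⟫ = lam1 * b z χ}
      add_mem' := by
        intro p q hp hq χ
        simp only [Set.mem_setOf_eq] at hp hq
        simp only [inner_add_left, hp χ, hq χ, map_add, LinearMap.add_apply]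
        ring
      zero_mem' := by
        intro χ; simp
      smul_mem' := by
        intro c p hp χ
        simp only [Set.mem_setOf_eq] at hp
        simp only [inner_smul_left, hp χ, map_smul, LinearMap.smul_apply, smul_eq_mul,
          RCLike.star_def, starRingEnd_apply, star_trivial]
        ring } with hKdef
  have hKmem : ∀ z : H, z ∈ K ↔ ∀ χ : H, ⟪z, χ⟫ = lam1 * b z χ := fun z => Iff.rfl
  have hKclosed : IsClosed (K : Set H) := by
    have hset : (K : Set H) = ⋂ χ : H, {z : H | ⟪z, χ⟫ - lam1 * b z χ = 0} := by
      ext z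
      simp only [SetLike.mem_coe, hKmem, Set.mem_iInter, Set.mem_setOf_eq, sub_eq_zero]
    rw [hset]
    refine isClosed_iInter fun χ => isClosed_eq ?_ continuous_const
    have hcont2 : Continuous fun z : H => b z χ := by
      have hC : ∀ z : H, ‖b.flip χ z‖ ≤ (‖χ‖ / lam1) * ‖z‖ := by
        intro z
        have h1 : (b z χ) ^ 2 ≤ b z z * b χ χ := bilin_cs b hb_symm hpsd z χ
        have h2 : lam1 * b z z ≤ ‖z‖ ^ 2 := hbb z
        have h3 : lam1 * b χ χ ≤ ‖χ‖ ^ 2 := hbb χ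
        have h4 : (b z χ) ^ 2 ≤ (‖χ‖ / lam1 * ‖z‖) ^ 2 := by
          have hbz := hpsd z
          have hbχ := hpsd χ
          rw [div_mul_eq_mul_div, div_pow, le_div_iff₀ (by positivity)]
          have hm1 : (lam1 * b z z) * (lam1 * b χ χ) ≤ ‖z‖ ^ 2 * ‖χ‖ ^ 2 :=
            mul_le_mul h2 h3 (mul_nonneg hlam1.le hbχ) (sq_nonneg _)
          have hm2 : lam1 ^ 2 * (b z χ) ^ 2 ≤ lam1 ^ 2 * (b z z * b χ χ) :=
            mul_le_mul_of_nonneg_left h1 (sq_nonneg lam1)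
          nlinarith [hm1, hm2]
        have h5 : |b z χ| ≤ ‖χ‖ / lam1 * ‖z‖ := by
          have h6 := Real.sqrt_le_sqrt h4
          rwa [Real.sqrt_sq_eq_abs, Real.sqrt_sq (by positivity)] at h6
        simpa [LinearMap.flip_apply, Real.norm_eq_abs] using h5
      have := AddMonoidHomClass.continuous_of_bound (b.flip χ) (‖χ‖ / lam1) hC
      exact this.congr fun z => LinearMap.flip_apply b z χ
    exact ((continuous_id.inner continuous_const).sub (continuous_const.mul hcont2))
  haveI : CompleteSpace K := hKclosed.completeSpace_coe
  obtain ⟨u1, hu1K, hu2o'⟩ : ∃ u1 : H, u1 ∈ K ∧ x - u1 ∈ Kᗮ :=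
    ⟨↑(K.orthogonalProjectionOnto x), SetLike.coe_mem _,
      K.sub_starProjection_mem_orthogonal x⟩
  set u2 : H := x - u1 with hu2def
  have hu2o : u2 ∈ Kᗮ := hu2o'
  have hu1e : ∀ χ : H, ⟪u1, χ⟫ = lam1 * b u1 χ := (hKmem u1).mp hu1K
  have h12a : ⟪u1, u2⟫ = 0 := (Submodule.mem_orthogonal K u2).mp hu2o u1 hu1K
  have h12b : b u1 u2 = 0 := by
    have h := hu1e u2
    rw [h12a] at h
    have := h.symm
    rcases mul_eq_zero.mp this with h' | h'
    · exact absurd h' hlam1.ne'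
    · exact h'
  have hxsplit : x = u1 + u2 := by rw [hu2def]; abel
  have hBsum : b u1 u1 + b u2 u2 = 1 := by
    have e1 : b x x = b u1 u1 + b u1 u2 + b u2 u1 + b u2 u2 := by
      conv_lhs => rw [hxsplit]
      simp only [map_add, LinearMap.add_apply]
      ring
    rw [hx1, h12b, hb_symm u2 u1, h12b] at e1
    linarith
  have hNsum : lam1 * b u1 u1 + ‖u2‖ ^ 2 = l := by
    have e2 : ‖x‖ ^ 2 = ‖u1‖ ^ 2 + 2 * ⟪u1, u2⟫ + ‖u2‖ ^ 2 := by
      conv_lhs => rw [hxsplit]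
      exact norm_add_sq_real u1 u2
    have e3 : ‖u1‖ ^ 2 = lam1 * b u1 u1 := by
      rw [← real_inner_self_eq_norm_sq]
      exact hu1e u1
    rw [hnx, e3, h12a] at e2
    linarith
  have hB4 : lam2 * b u2 u2 ≤ ‖u2‖ ^ 2 := by
    by_cases h2z : u2 = 0
    · simp [h2z]
    · have hpre : ∀ χ₁ : H, (∀ χ : H, ⟪χ₁, χ⟫ = lam1 * b χ₁ χ) → b u2 χ₁ = 0 := by
        intro χ₁ hχ₁
        have hmemK : χ₁ ∈ K := (hKmem χ₁).mpr hχ₁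
        have ho : ⟪χ₁, u2⟫ = 0 := (Submodule.mem_orthogonal K u2).mp hu2o χ₁ hmemK
        have h := hχ₁ u2
        rw [ho] at h
        rw [hb_symm u2 χ₁]
        rcases mul_eq_zero.mp h.symm with h' | h'
        · exact absurd h' hlam1.ne'
        · exact h'
      have h := hmin2 u2 h2z hpre
      unfold rayleigh at h
      rw [le_div_iff₀ (hb_pos u2 h2z)] at h
      exact h
  have hwu2 : ⟪wx, u2⟫ = b u1 u1 * (l - lam1) := by
    have h := hwx u2
    have e4 : ⟪x, u2⟫ = ‖u2‖ ^ 2 := by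
      conv_lhs => rw [hxsplit]
      rw [inner_add_left, h12a, real_inner_self_eq_norm_sq]
      ring
    have e5 : b x u2 = b u2 u2 := by
      conv_lhs => rw [hxsplit]
      simp only [map_add, LinearMap.add_apply, h12b]
      ring
    rw [e4, e5] at h
    rw [h]
    linear_combination hNsum - l * hBsum
  clear hu1e h12a hu2o hu2o' hu1K hKclosed hKmem
  clear! K
  -- lower bound for ‖w‖²
  have hW : (lam2 - l) ^ 2 * (l - lam1) ≤ lam2 ^ 2 * ‖wx‖ ^ 2 := by
    have hW0 : (0:ℝ) ≤ ‖wx‖ ^ 2 := sq_nonneg _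
    have hΛ : (0:ℝ) ≤ l - lam1 := by linarith
    have hB10 : (0:ℝ) ≤ b u1 u1 := hpsd u1
    have hN20 : (0:ℝ) ≤ ‖u2‖ ^ 2 := sq_nonneg _
    have hl2l : (0:ℝ) ≤ lam2 - l := by linarith
    have h21 : (0:ℝ) < lam2 - lam1 := by linarith
    have hB2eq : b u2 u2 = 1 - b u1 u1 := by linarith
    have hN2eq : ‖u2‖ ^ 2 = l - lam1 * b u1 u1 := by linarith
    rw [hB2eq] at hB4
    have hi : lam2 - l ≤ b u1 u1 * (lam2 - lam1) := by
      rw [hN2eq] at hB4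
      linarith [hB4]
    have hii : ‖u2‖ ^ 2 * (lam2 - lam1) ≤ lam2 * (l - lam1) := by
      rw [hN2eq]
      linarith [mul_le_mul_of_nonneg_left hi hlam1.le]
    have hcsw : (b u1 u1 * (l - lam1)) ^ 2 ≤ ‖wx‖ ^ 2 * ‖u2‖ ^ 2 := by
      rw [← hwu2]
      have habs := abs_real_inner_le_norm wx u2
      have h2 := mul_self_le_mul_self (abs_nonneg ⟪wx, u2⟫) habs
      linarith [h2, sq_abs ⟪wx, u2⟫]
    rcases eq_or_lt_of_le hΛ with hEq | hLt
    · rw [← hEq, mul_zero]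
      positivity
    · have hsq : (lam2 - l) ^ 2 ≤ (b u1 u1 * (lam2 - lam1)) ^ 2 := by
        linarith [mul_self_le_mul_self hl2l hi]
      have hA : (lam2 - l) ^ 2 * (l - lam1) ^ 2 ≤ ‖wx‖ ^ 2 * ‖u2‖ ^ 2 * (lam2 - lam1) ^ 2 := by
        linarith [mul_le_mul_of_nonneg_right hsq (sq_nonneg (l - lam1)),
          mul_le_mul_of_nonneg_right hcsw (sq_nonneg (lam2 - lam1))]
      have hB : ‖wx‖ ^ 2 * ‖u2‖ ^ 2 * (lam2 - lam1) ^ 2 ≤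
          ‖wx‖ ^ 2 * (lam2 * (l - lam1)) * (lam2 - lam1) := by
        linarith [mul_le_mul_of_nonneg_left hii (mul_nonneg hW0 h21.le)]
      have hC : ‖wx‖ ^ 2 * (lam2 * (l - lam1)) * (lam2 - lam1) ≤
          ‖wx‖ ^ 2 * (lam2 * (l - lam1)) * lam2 := by
        have hnn : (0:ℝ) ≤ ‖wx‖ ^ 2 * (lam2 * (l - lam1)) := by positivity
        linarith [mul_le_mul_of_nonneg_left (show lam2 - lam1 ≤ lam2 by linarith) hnn]
      have hfin : (lam2 - l) ^ 2 * (l - lam1) * (l - lam1) ≤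
          lam2 ^ 2 * ‖wx‖ ^ 2 * (l - lam1) := by linarith [hA, hB, hC]
      exact le_of_mul_le_mul_right hfin hLt
  clear hB4 hBsum hNsum hwu2 hu2def hxsplit h12b
  clear u2 u1
  -- the error bound
  have hee : ‖vx - wx‖ ^ 2 ≤ eta ^ 2 * ‖wx‖ ^ 2 := by
    linarith [mul_self_le_mul_self (norm_nonneg (vx - wx)) hvx]
  set y := Real.sqrt (b vx vx) with hydef
  have hy0 : (0:ℝ) ≤ y := Real.sqrt_nonneg _
  have hy2 : y ^ 2 = b vx vx := Real.sq_sqrt (hpsd vx)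
  have hbxv : (b x vx) ^ 2 ≤ b vx vx := by
    have h := bilin_cs b hb_symm hpsd x vx
    rw [hx1] at h
    linarith
  have hbdd : b (x - vx) (x - vx) = 1 - 2 * b x vx + b vx vx := by
    have h : b (x - vx) (x - vx) = b x x - b x vx - b vx x + b vx vx := by
      simp only [map_sub, LinearMap.sub_apply]
      ring
    rw [h, hx1, hb_symm vx x]
    ring
  have hbd_pos : 0 < b (x - vx) (x - vx) := hb_pos _ hd0
  have hbd_le : b (x - vx) (x - vx) ≤ (1 + y) ^ 2 := by
    nlinarith [hbdd, hbxv, hy2, hy0, sq_nonneg (y + b x vx)]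
  -- the key identity
  have hid : l * b (x - vx) (x - vx) - ‖x - vx‖ ^ 2 =
      ‖wx‖ ^ 2 - ‖vx - wx‖ ^ 2 + l * b vx vx := by
    have h1 : ‖x - vx‖ ^ 2 = ‖x‖ ^ 2 - 2 * ⟪x, vx⟫ + ‖vx‖ ^ 2 := norm_sub_sq_real x vx
    have h2 : ‖vx - wx‖ ^ 2 = ‖vx‖ ^ 2 - 2 * ⟪vx, wx⟫ + ‖wx‖ ^ 2 := norm_sub_sq_real vx wx
    have h3 := hwx vx
    have h4 : ⟪vx, wx⟫ = ⟪wx, vx⟫ := real_inner_comm wx vx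
    rw [hbdd, h1, h2, h4, h3, hnx]
    ring
  -- final scalar estimates
  have hc : (0:ℝ) < 1 - eta ^ 2 := by nlinarith
  have hΛ0 : (0:ℝ) ≤ l - lam1 := by linarith
  have hρΛ : (0:ℝ) ≤ (1 - eta ^ 2) * (lam2 - l) ^ 2 * (l - lam1) := by positivity
  have hD : 0 < lam2 ^ 2 * l + (1 - eta ^ 2) * (lam2 - l) ^ 2 * (l - lam1) :=
    qfun_denom_pos lam1 lam2 eta l hlam1 hl1 (by nlinarith) hlam12
  have hQd : l * b (x - vx) (x - vx) - ‖x - vx‖ ^ 2 ≥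
      (1 - eta ^ 2) * ‖wx‖ ^ 2 + l * y ^ 2 := by
    rw [hid, hy2]
    linarith [hee]
  have hWc : (1 - eta ^ 2) * (lam2 - l) ^ 2 * (l - lam1) ≤
      lam2 ^ 2 * ((1 - eta ^ 2) * ‖wx‖ ^ 2) := by
    linarith [mul_le_mul_of_nonneg_left hW hc.le]
  have hkey1 : lam2 ^ 2 *
      (l * ((1 - eta ^ 2) * (lam2 - l) ^ 2) * (l - lam1) * (1 + y) ^ 2) ≤ lam2 ^ 2 *
      ((lam2 ^ 2 * l + (1 - eta ^ 2) * (lam2 - l) ^ 2 * (l - lam1)) *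
        ((1 - eta ^ 2) * ‖wx‖ ^ 2 + l * y ^ 2)) := by
    have hh := mul_le_mul_of_nonneg_left hWc hD.le
    linarith [hh, sq_nonneg (lam2 ^ 2 * l * y - (1 - eta ^ 2) * (lam2 - l) ^ 2 * (l - lam1))]
  have hkey2 : (lam2 ^ 2 * l + (1 - eta ^ 2) * (lam2 - l) ^ 2 * (l - lam1)) *
      ((1 - eta ^ 2) * ‖wx‖ ^ 2 + l * y ^ 2) ≥
      l * ((1 - eta ^ 2) * (lam2 - l) ^ 2) * (l - lam1) * (1 + y) ^ 2 :=
    le_of_mul_le_mul_left hkey1 (pow_pos hlam2 2)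
  have hkey3 : lam2 ^ 2 * l ^ 2 * b (x - vx) (x - vx) ≥
      (lam2 ^ 2 * l + (1 - eta ^ 2) * (lam2 - l) ^ 2 * (l - lam1)) * ‖x - vx‖ ^ 2 := by
    have s1 := mul_le_mul_of_nonneg_left hQd hD.le
    have s2 := mul_le_mul_of_nonneg_left hbd_le
      (show (0:ℝ) ≤ l * ((1 - eta ^ 2) * (lam2 - l) ^ 2) * (l - lam1) by positivity)
    linarith [s1, s2, hkey2]
  have hr_le : rayleigh b (x - vx) ≤
      lam2 ^ 2 * l ^ 2 / (lam2 ^ 2 * l + (1 - eta ^ 2) * (lam2 - l) ^ 2 * (l - lam1)) := by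
    unfold rayleigh
    rw [div_le_div_iff₀ hbd_pos hD]
    linarith [hkey3]
  refine ⟨?_, ?_, ?_⟩
  · have h : lam2 ^ 2 * l ^ 2 / (lam2 ^ 2 * l + (1 - eta ^ 2) * (lam2 - l) ^ 2 * (l - lam1)) ≤
        l := by
      rw [div_le_iff₀ hD]
      linarith [mul_nonneg hρΛ hl0.le]
    linarith
  · have h : lam2 ^ 2 * l ^ 2 / (lam2 ^ 2 * l + (1 - eta ^ 2) * (lam2 - l) ^ 2 * (l - lam1)) <
        lam2 := by
      rw [div_lt_iff₀ hD]
      linarith [mul_lt_mul_of_pos_left hxl2 (show (0:ℝ) < lam2 ^ 2 * l by positivity),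
        mul_nonneg hρΛ hlam2.le]
    linarith
  · have hq : lam2 ^ 2 * l ^ 2 / (lam2 ^ 2 * l + (1 - eta ^ 2) * (lam2 - l) ^ 2 * (l - lam1)) -
        lam1 = qfun lam1 lam2 eta l * (l - lam1) := by
      unfold qfun
      field_simp
      ring
    linarith

end StepLemma

/-- geometric convergence of the Rayleigh quotients of the approximate inverse
iteration to the minimum eigenvalue `λ₁`. -/
theorem rayleigh_geometric_convergence {H : Type*} [NormedAddCommGroup H] [InnerProductSpace ℝ H] [CompleteSpace H]
    (b : LinearMap.BilinForm ℝ H)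
    (hb_symm : ∀ x y : H, b x y = b y x)
    (hb_pos : ∀ x : H, x ≠ 0 → 0 < b x x)
    (lam1 : ℝ) (hlam1 : 0 < lam1)
    (hmin : ∀ x : H, x ≠ 0 → lam1 ≤ rayleigh b x)
    (hE1 : ∃ x : H, x ≠ 0 ∧ ∀ χ : H, ⟪ x, χ⟫ = lam1 * b x χ)
    (lam2 : ℝ) (hlam12 : lam1 < lam2)
    (hmin2 : ∀ x : H, x ≠ 0 →
      (∀ χ₁ : H, (∀ χ : H, ⟪χ₁, χ⟫ = lam1 * b χ₁ χ) → b x χ₁ = 0) →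
      lam2 ≤ rayleigh b x)
    (eta : ℝ) (heta0 : 0 ≤ eta) (heta1 : eta < 1)
    (u v w : ℕ → H)
    (hnorm : ∀ k, b (u k) (u k) = 1)
    (h0 : rayleigh b (u 0) < lam2)
    (hw : ∀ k, ∀ χ : H, ⟪w k, χ⟫ = ⟪u k, χ⟫ - rayleigh b (u k) * b (u k) χ)
    (hv : ∀ k, ‖v k - w k‖ ≤ eta * ‖w k‖)
    (hiter : ∀ k, u (k + 1) = (Real.sqrt (b (u k - v k) (u k - v k)))⁻¹ • (u k - v k)) :
    (∀ k, rayleigh b (u (k + 1)) ≤ rayleigh b (u k)) ∧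
    (∀ k, rayleigh b (u (k + 1)) - lam1 ≤
      qfun lam1 lam2 eta (rayleigh b (u k)) * (rayleigh b (u k) - lam1)) ∧
    (∀ k, qfun lam1 lam2 eta (rayleigh b (u k)) ≤ qfun lam1 lam2 eta (rayleigh b (u 0))) ∧
    qfun lam1 lam2 eta (rayleigh b (u 0)) < 1 ∧
    (∀ k, rayleigh b (u k) - lam1 ≤
      qfun lam1 lam2 eta (rayleigh b (u 0)) ^ k * (rayleigh b (u 0) - lam1)) ∧
    Filter.Tendsto (fun k => rayleigh b (u k)) Filter.atTop (nhds lam1) := by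
  classical
  have hu0 : ∀ k, u k ≠ 0 := by
    intro k h
    have h1 := hnorm k
    rw [h] at h1
    simp at h1
  have hge : ∀ k, lam1 ≤ rayleigh b (u k) := fun k => hmin (u k) (hu0 k)
  have hd0 : ∀ k, u k - v k ≠ 0 := by
    intro k h
    have h1 := hu0 (k + 1)
    rw [hiter k, h, smul_zero] at h1
    exact h1 rfl
  have hru : ∀ k, rayleigh b (u (k + 1)) = rayleigh b (u k - v k) := by
    intro k
    have hbd : 0 < b (u k - v k) (u k - v k) := hb_pos _ (hd0 k)
    have hc0 : (0:ℝ) < Real.sqrt (b (u k - v k) (u k - v k)) := Real.sqrt_pos.mpr hbd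
    have hc : (Real.sqrt (b (u k - v k) (u k - v k)))⁻¹ ≠ 0 := by positivity
    rw [hiter k]
    unfold rayleigh
    rw [norm_smul]
    simp only [map_smul, LinearMap.smul_apply, smul_eq_mul, Real.norm_eq_abs, mul_pow, sq_abs]
    rw [show ∀ c bd : ℝ, c * (c * bd) = c ^ 2 * bd from fun c bd => by ring,
      mul_div_mul_left _ _ (pow_ne_zero 2 hc)]
  have step : ∀ k, rayleigh b (u k) < lam2 →
      rayleigh b (u (k + 1)) ≤ rayleigh b (u k) ∧ rayleigh b (u (k + 1)) < lam2 ∧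
      rayleigh b (u (k + 1)) - lam1 ≤
        qfun lam1 lam2 eta (rayleigh b (u k)) * (rayleigh b (u k) - lam1) := by
    intro k hk
    have h := step_lemma b hb_symm hb_pos lam1 hlam1 hmin lam2 hlam12 hmin2 eta heta0 heta1
      (u k) (w k) (v k) (hnorm k) hk (hw k) (hv k) (hd0 k)
    rw [← hru k] at h
    exact h
  have hlt2 : ∀ k, rayleigh b (u k) < lam2 := by
    intro k
    induction k with
    | zero => exact h0
    | succ n ih => exact (step n ih).2.1
  have hmono : ∀ k, rayleigh b (u (k + 1)) ≤ rayleigh b (u k) := fun k => (step k (hlt2 k)).1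
  have honestep : ∀ k, rayleigh b (u (k + 1)) - lam1 ≤
      qfun lam1 lam2 eta (rayleigh b (u k)) * (rayleigh b (u k) - lam1) :=
    fun k => (step k (hlt2 k)).2.2
  have hle0 : ∀ k, rayleigh b (u k) ≤ rayleigh b (u 0) := by
    intro k
    induction k with
    | zero => exact le_refl _
    | succ n ih => exact le_trans (hmono n) ih
  have heta2 : eta ^ 2 < 1 := by nlinarith
  have hqmono : ∀ k, qfun lam1 lam2 eta (rayleigh b (u k)) ≤
      qfun lam1 lam2 eta (rayleigh b (u 0)) := fun k =>
    qfun_mono lam1 lam2 eta (rayleigh b (u k)) (rayleigh b (u 0)) hlam1 hlam12 heta2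
      (hge k) (hle0 k) h0
  -- q₀ ∈ [0, 1)
  have hD0 := qfun_denom_pos lam1 lam2 eta (rayleigh b (u 0)) hlam1 (hge 0) heta2 hlam12
  have hq0lt1 : qfun lam1 lam2 eta (rayleigh b (u 0)) < 1 := by
    unfold qfun
    have hnum : 0 < (1 - eta ^ 2) * rayleigh b (u 0) * (lam2 - rayleigh b (u 0)) ^ 2 := by
      have h1 : (0:ℝ) < 1 - eta ^ 2 := by linarith
      have h2 : (0:ℝ) < rayleigh b (u 0) := lt_of_lt_of_le hlam1 (hge 0)
      have h3 : (0:ℝ) < lam2 - rayleigh b (u 0) := by linarith [h0]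
      positivity
    linarith [div_pos hnum hD0]
  have hq0nonneg : ∀ k, 0 ≤ qfun lam1 lam2 eta (rayleigh b (u k)) := by
    intro k
    unfold qfun
    rw [sub_nonneg, div_le_one (qfun_denom_pos lam1 lam2 eta (rayleigh b (u k)) hlam1 (hge k)
      heta2 hlam12)]
    have h1 : (0:ℝ) < 1 - eta ^ 2 := by linarith
    have h2 : (0:ℝ) < rayleigh b (u k) := lt_of_lt_of_le hlam1 (hge k)
    have h3 : (0:ℝ) < lam2 - rayleigh b (u k) := by linarith [hlt2 k]
    have h4 : (lam2 - rayleigh b (u k)) ^ 2 ≤ lam2 ^ 2 := by nlinarith [h2, h3]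
    have t1 : (1 - eta ^ 2) * (rayleigh b (u k) * (lam2 - rayleigh b (u k)) ^ 2) ≤
        1 * (rayleigh b (u k) * (lam2 - rayleigh b (u k)) ^ 2) :=
      mul_le_mul_of_nonneg_right (by linarith [sq_nonneg eta]) (by positivity)
    have t2 : rayleigh b (u k) * (lam2 - rayleigh b (u k)) ^ 2 ≤
        rayleigh b (u k) * lam2 ^ 2 := mul_le_mul_of_nonneg_left h4 h2.le
    have t3 : (0:ℝ) ≤ (1 - eta ^ 2) * (lam2 - rayleigh b (u k)) ^ 2 *
        (rayleigh b (u k) - lam1) :=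
      mul_nonneg (mul_nonneg h1.le (sq_nonneg _)) (by linarith [hge k])
    linarith [t1, t2, t3]
  have hgeom : ∀ k, rayleigh b (u k) - lam1 ≤
      qfun lam1 lam2 eta (rayleigh b (u 0)) ^ k * (rayleigh b (u 0) - lam1) := by
    intro k
    induction k with
    | zero => simp
    | succ n ih =>
      have h1 := honestep n
      have h2 : qfun lam1 lam2 eta (rayleigh b (u n)) * (rayleigh b (u n) - lam1) ≤
          qfun lam1 lam2 eta (rayleigh b (u 0)) * (rayleigh b (u n) - lam1) :=
        mul_le_mul_of_nonneg_right (hqmono n) (by linarith [hge n])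
      have h3 : qfun lam1 lam2 eta (rayleigh b (u 0)) * (rayleigh b (u n) - lam1) ≤
          qfun lam1 lam2 eta (rayleigh b (u 0)) *
            (qfun lam1 lam2 eta (rayleigh b (u 0)) ^ n * (rayleigh b (u 0) - lam1)) :=
        mul_le_mul_of_nonneg_left ih (hq0nonneg 0)
      calc rayleigh b (u (n + 1)) - lam1 ≤ _ := h1
        _ ≤ _ := h2
        _ ≤ _ := h3
        _ = qfun lam1 lam2 eta (rayleigh b (u 0)) ^ (n + 1) * (rayleigh b (u 0) - lam1) := by
            ring
  refine ⟨hmono, honestep, hqmono, hq0lt1, hgeom, ?_⟩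
  -- convergence by squeezing
  have htend : Filter.Tendsto
      (fun k : ℕ => lam1 + qfun lam1 lam2 eta (rayleigh b (u 0)) ^ k * (rayleigh b (u 0) - lam1))
      Filter.atTop (nhds lam1) := by
    have h1 : Filter.Tendsto (fun k : ℕ => qfun lam1 lam2 eta (rayleigh b (u 0)) ^ k)
        Filter.atTop (nhds 0) :=
      tendsto_pow_atTop_nhds_zero_of_lt_one (hq0nonneg 0) hq0lt1
    have h2 := (h1.mul_const (rayleigh b (u 0) - lam1)).const_add lam1
    simpa using h2
  refine tendsto_of_tendsto_of_tendsto_of_le_of_le tendsto_const_nhds htend hge ?_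
  intro k
  dsimp only
  linarith [hgeom k]
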